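/- arXiv:2006.15688 — 8 statements merged into one kernel-verified Lean document; each statement's English description precedes it below -/
import Mathlib

section
/- There exist constants 0 < c ≤ C such that for all η, σ ∈ ℝ the following hold: (i) if η·σ < 0 then c·min(⟨η⟩,⟨σ⟩) ≤ ⟨η⟩ + ⟨σ⟩ − ⟨η+σ⟩ ≤ C·min(⟨η⟩,⟨σ⟩); (ii) if η·σ > 0 then c/min(⟨η⟩,⟨σ⟩) ≤ ⟨η⟩ + ⟨σ⟩ − ⟨η+σ⟩ ≤ C/min(⟨η⟩,⟨σ⟩). -/
/-- The Japanese bracket `⟨x⟩ = √(1 + x²)`. -/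
noncomputable def jb (x : ℝ) : ℝ := Real.sqrt (1 + x ^ 2)

lemma jb_sq (x : ℝ) : jb x ^ 2 = 1 + x ^ 2 :=
  Real.sq_sqrt (by positivity)

lemma jb_nonneg (x : ℝ) : 0 ≤ jb x := Real.sqrt_nonneg _

lemma one_le_jb (x : ℝ) : 1 ≤ jb x := by
  nlinarith [jb_sq x, jb_nonneg x, sq_nonneg x]

lemma abs_le_jb (x : ℝ) : |x| ≤ jb x := by
  nlinarith [jb_sq x, jb_nonneg x, sq_abs x, abs_nonneg x]

set_option maxHeartbeats 1000000 in
/-- Two-sided asymptotic description of the Klein–Gordon phase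
`⟨η⟩ + ⟨σ⟩ − ⟨η+σ⟩` (Lemma 6.1, eq. (6.4) in the paper). -/
theorem phase_two_sided_bounds :
    ∃ c C : ℝ, 0 < c ∧ c ≤ C ∧
      ∀ η σ : ℝ,
        (η * σ < 0 →
          c * min (jb η) (jb σ) ≤ jb η + jb σ - jb (η + σ) ∧
            jb η + jb σ - jb (η + σ) ≤ C * min (jb η) (jb σ)) ∧
        (η * σ > 0 →
          c / min (jb η) (jb σ) ≤ jb η + jb σ - jb (η + σ) ∧
            jb η + jb σ - jb (η + σ) ≤ C / min (jb η) (jb σ)) := by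
  refine ⟨1/4, 5, by norm_num, by norm_num, fun η σ => ?_⟩
  have ha2 := jb_sq η
  have hb2 := jb_sq σ
  have hc2 := jb_sq (η + σ)
  set a := jb η with ha'
  set b := jb σ with hb'
  set c := jb (η + σ) with hc'
  have ha1 : 1 ≤ a := one_le_jb η
  have hb1 : 1 ≤ b := one_le_jb σ
  have hc1 : 1 ≤ c := one_le_jb (η + σ)
  have ha0 : 0 < a := by linarith
  have hb0 : 0 < b := by linarith
  set m := min a b with hm
  set M := max a b with hM
  have hmMeq : m * M = a * b := min_mul_max a b
  have hm1 : 1 ≤ m := le_min ha1 hb1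
  have hm0 : 0 < m := by linarith
  have hmM : m ≤ M := min_le_max
  have hM0 : 0 < M := by linarith
  have haM : a ≤ M := le_max_left a b
  have hbM : b ≤ M := le_max_right a b
  have habs : |η| * |σ| ≤ a * b :=
    mul_le_mul (abs_le_jb η) (abs_le_jb σ) (abs_nonneg σ) (le_of_lt ha0)
  have hprod : η * σ ≤ a * b := by
    calc η * σ ≤ |η * σ| := le_abs_self _
    _ = |η| * |σ| := abs_mul η σ
    _ ≤ a * b := habs
  have hprod' : -(η * σ) ≤ a * b := by
    calc -(η * σ) ≤ |η * σ| := neg_le_abs _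
    _ = |η| * |σ| := abs_mul η σ
    _ ≤ a * b := habs
  have hcab : c ≤ a + b := by
    have hpos : 0 < a + b + c := by linarith
    nlinarith [hc2, ha2, hb2, hprod, hpos]
  have hD0 : 0 < a + b + c := by linarith
  have hDle : a + b + c ≤ 4 * M := by linarith
  have hMD : M ≤ a + b + c := by
    have : M ≤ a + b := max_le (by linarith) (by linarith)
    linarith
  have hID : (a + b - c) * (a + b + c) = 1 + 2 * (a * b - η * σ) := by
    linear_combination ha2 + hb2 - hc2
  have hmM0 : 0 < m * M := mul_pos hm0 hM0
  constructor
  · intro hneg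
    have hN1 : 2 * (m * M) ≤ 1 + 2 * (a * b - η * σ) := by
      rw [hmMeq]; linarith
    have hN2 : 1 + 2 * (a * b - η * σ) ≤ 5 * (m * M) := by
      rw [hmMeq]
      have : 1 ≤ m * M := by nlinarith
      linarith
    constructor
    · have key : (1 / 4 * m) * (a + b + c) ≤ (a + b - c) * (a + b + c) := by
        rw [hID]
        have t1 : m * (a + b + c) ≤ m * (4 * M) :=
          mul_le_mul_of_nonneg_left hDle hm0.le
        linarith
      exact le_of_mul_le_mul_right key hD0
    · have key : (a + b - c) * (a + b + c) ≤ (5 * m) * (a + b + c) := by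
        rw [hID]
        have t1 : 5 * m * M ≤ 5 * m * (a + b + c) :=
          mul_le_mul_of_nonneg_left hMD (by linarith)
        linarith
      exact le_of_mul_le_mul_right key hD0
  · intro hpos
    have hab0 : 0 < a * b := mul_pos ha0 hb0
    have hK0 : 0 < a * b + η * σ := by linarith
    have hKle : a * b + η * σ ≤ 2 * (m * M) := by rw [hmMeq]; linarith
    have hKge : m * M ≤ a * b + η * σ := by rw [hmMeq]; linarith
    have hEK : (a * b - η * σ) * (a * b + η * σ) = 1 + η ^ 2 + σ ^ 2 := by
      linear_combination b ^ 2 * ha2 + (1 + η ^ 2) * hb2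
    have hSge : M ^ 2 ≤ 1 + η ^ 2 + σ ^ 2 := by
      rcases max_choice a b with h | h
      · have hMa : M = a := h
        rw [hMa]; linarith [sq_nonneg σ, ha2]
      · have hMb : M = b := h
        rw [hMb]; linarith [sq_nonneg η, hb2]
    have hSle : 1 + η ^ 2 + σ ^ 2 ≤ 2 * M ^ 2 := by
      have t1 : 0 ≤ (M - a) * (M + a) :=
        mul_nonneg (by linarith) (by linarith)
      have t2 : 0 ≤ (M - b) * (M + b) :=
        mul_nonneg (by linarith) (by linarith)
      linarith [t1, t2, ha2, hb2]
    have hE1 : M ≤ 2 * m * (a * b - η * σ) := by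
      have key : M * (a * b + η * σ) ≤ (2 * m * (a * b - η * σ)) * (a * b + η * σ) := by
        have h2 : (2 * m * (a * b - η * σ)) * (a * b + η * σ)
            = 2 * m * (1 + η ^ 2 + σ ^ 2) := by linear_combination 2 * m * hEK
        rw [h2]
        have t1 : M * (a * b + η * σ) ≤ M * (2 * (m * M)) :=
          mul_le_mul_of_nonneg_left hKle hM0.le
        have t2 : 2 * m * M ^ 2 ≤ 2 * m * (1 + η ^ 2 + σ ^ 2) :=
          mul_le_mul_of_nonneg_left hSge (by linarith)
        linarith [t1, t2, ha2, hb2]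
      exact le_of_mul_le_mul_right key hK0
    have hE2 : 2 * m * (a * b - η * σ) ≤ 4 * M := by
      have key : (2 * m * (a * b - η * σ)) * (a * b + η * σ) ≤ (4 * M) * (a * b + η * σ) := by
        have h2 : (2 * m * (a * b - η * σ)) * (a * b + η * σ)
            = 2 * m * (1 + η ^ 2 + σ ^ 2) := by linear_combination 2 * m * hEK
        rw [h2]
        have t1 : 2 * m * (1 + η ^ 2 + σ ^ 2) ≤ 2 * m * (2 * M ^ 2) :=
          mul_le_mul_of_nonneg_left hSle (by linarith)
        have t2 : 4 * M * (m * M) ≤ 4 * M * (a * b + η * σ) :=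
          mul_le_mul_of_nonneg_left hKge (by linarith)
        linarith [t1, t2, ha2, hb2]
      exact le_of_mul_le_mul_right key hK0
    constructor
    · rw [div_le_iff₀ hm0]
      have key : (1 / 4) * (a + b + c) ≤ ((a + b - c) * m) * (a + b + c) := by
        have h3 : ((a + b - c) * m) * (a + b + c) = m * (1 + 2 * (a * b - η * σ)) := by
          linear_combination m * hID
        rw [h3]
        linarith [hDle, hE1, hm1]
      exact le_of_mul_le_mul_right key hD0
    · rw [le_div_iff₀ hm0]
      have key : ((a + b - c) * m) * (a + b + c) ≤ 5 * (a + b + c) := by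
        have h3 : ((a + b - c) * m) * (a + b + c) = m * (1 + 2 * (a * b - η * σ)) := by
          linear_combination m * hID
        rw [h3]
        linarith [hE2, hmM, hMD]
      exact le_of_mul_le_mul_right key hD0
end

section
/- There exists a constant C > 0 such that for every choice of signs ι₁, ι₂ ∈ {+1, −1} and all η, σ ∈ ℝ one has |⟨η+σ⟩ − ι₁⟨η⟩ − ι₂⟨σ⟩| ≥ (1/C) · (min(⟨η+σ⟩, ⟨η⟩, ⟨σ⟩))⁻¹. In particular the phase Φ_{ι₁ι₂}(η+σ, η, σ) never vanishes. -/
/-- The quadratic Klein–Gordon phase `Φ_{ι₁ι₂}(ξ,η,σ) = ⟨ξ⟩ − ι₁⟨η⟩ − ι₂⟨σ⟩`. -/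
noncomputable def Phi (ι₁ ι₂ : ℝ) (ξ η σ : ℝ) : ℝ := jb ξ - ι₁ * jb η - ι₂ * jb σ

lemma jb_pos (x : ℝ) : 0 < jb x := Real.sqrt_pos.mpr (by positivity)

lemma jb_neg (x : ℝ) : jb (-x) = jb x := by
  unfold jb; congr 1; ring

lemma jb_sub_abs (x : ℝ) : (2 * jb x)⁻¹ ≤ jb x - |x| := by
  have h0 := jb_pos x
  have h1 := abs_le_jb x
  have habs := abs_nonneg x
  have key : (jb x - |x|) * (jb x + |x|) = 1 := by
    have h2 := jb_sq x; have h3 := sq_abs x; nlinarith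
  have hpos : 0 < jb x + |x| := by linarith
  have heq : jb x - |x| = (jb x + |x|)⁻¹ := by
    field_simp; linarith [key]
  rw [heq]
  exact inv_anti₀ hpos (by linarith)

lemma jb_add_le (x y : ℝ) : jb (x + y) ≤ jb x + |y| := by
  have h1 := jb_sq x
  have h2 := abs_le_jb x
  have hy := abs_nonneg y
  have hx0 := jb_pos x
  have hxy : x * y ≤ jb x * |y| :=
    calc x * y ≤ |x * y| := le_abs_self _
      _ = |x| * |y| := abs_mul x y
      _ ≤ jb x * |y| := mul_le_mul_of_nonneg_right h2 hy
  have key : 1 + (x + y) ^ 2 ≤ (jb x + |y|) ^ 2 := by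
    nlinarith [sq_abs y]
  calc jb (x + y) = Real.sqrt (1 + (x + y) ^ 2) := rfl
    _ ≤ Real.sqrt ((jb x + |y|) ^ 2) := Real.sqrt_le_sqrt key
    _ = jb x + |y| := Real.sqrt_sq (by positivity)

lemma min_inv_bound (a b c D : ℝ)
    (h1 : (2 * a)⁻¹ ≤ D) (h2 : (2 * b)⁻¹ ≤ D) (h3 : (2 * c)⁻¹ ≤ D) :
    (1 / 2) * (min a (min b c))⁻¹ ≤ D := by
  have he : (1 / 2 : ℝ) * (min a (min b c))⁻¹ = (2 * min a (min b c))⁻¹ := by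
    rw [mul_inv]; ring
  rw [he]
  rcases min_choice a (min b c) with h | h
  · rw [h]; exact h1
  · rw [h]; rcases min_choice b c with h' | h' <;> rw [h'] <;> assumption

set_option maxHeartbeats 1000000 in
/-- The one-dimensional quadratic Klein–Gordon interaction is nonresonant on the
set `ξ = η + σ`: for every choice of signs, `|Φ_{ι₁ι₂}(η+σ,η,σ)| ≳ min(⟨η+σ⟩,⟨η⟩,⟨σ⟩)⁻¹`,
and in particular the phase never vanishes there. -/
theorem phase_nonresonant :
    ∃ C : ℝ, 0 < C ∧
      ∀ ι₁ ι₂ : ℝ, (ι₁ = 1 ∨ ι₁ = -1) → (ι₂ = 1 ∨ ι₂ = -1) →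
        ∀ η σ : ℝ,
          (1 / C) * (min (jb (η + σ)) (min (jb η) (jb σ)))⁻¹ ≤
              |Phi ι₁ ι₂ (η + σ) η σ| ∧
            Phi ι₁ ι₂ (η + σ) η σ ≠ 0 := by
  refine ⟨2, by norm_num, ?_⟩
  intro ι₁ ι₂ h1 h2 η σ
  set a := jb (η + σ) with ha'
  set b := jb η with hb'
  set c := jb σ with hc'
  have ha : 1 ≤ a := one_le_jb _
  have hb : 1 ≤ b := one_le_jb _
  have hc : 1 ≤ c := one_le_jb _
  -- triangle-type inequalities
  have hba : a ≤ b + |σ| := jb_add_le η σ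
  have hca : a ≤ c + |η| := by
    have h := jb_add_le σ η; rwa [add_comm σ η] at h
  have hb1 : b ≤ a + |σ| := by
    have h := jb_add_le (η + σ) (-σ)
    rwa [show η + σ + -σ = η by ring, abs_neg] at h
  have hb2 : b ≤ c + |η + σ| := by
    have h := jb_add_le (-σ) (η + σ)
    rwa [show -σ + (η + σ) = η by ring, jb_neg] at h
  have hc1 : c ≤ a + |η| := by
    have h := jb_add_le (η + σ) (-η)
    rwa [show η + σ + -η = σ by ring, abs_neg] at h
  have hc2 : c ≤ b + |η + σ| := by
    have h := jb_add_le (-η) (η + σ)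
    rwa [show -η + (η + σ) = σ by ring, jb_neg] at h
  -- lower bounds on bracket minus absolute value
  have sa : (2 * a)⁻¹ ≤ a - |η + σ| := jb_sub_abs (η + σ)
  have sb : (2 * b)⁻¹ ≤ b - |η| := jb_sub_abs η
  have sc : (2 * c)⁻¹ ≤ c - |σ| := jb_sub_abs σ
  have ia : (0:ℝ) < (2 * a)⁻¹ := by positivity
  have ib : (0:ℝ) < (2 * b)⁻¹ := by positivity
  have ic : (0:ℝ) < (2 * c)⁻¹ := by positivity
  have ha2 : (2 * a)⁻¹ ≤ 1 / 2 := by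
    rw [show (1:ℝ)/2 = (2:ℝ)⁻¹ by norm_num]
    exact inv_anti₀ (by norm_num) (by linarith)
  have hb2' : (2 * b)⁻¹ ≤ 1 / 2 := by
    rw [show (1:ℝ)/2 = (2:ℝ)⁻¹ by norm_num]
    exact inv_anti₀ (by norm_num) (by linarith)
  have hc2' : (2 * c)⁻¹ ≤ 1 / 2 := by
    rw [show (1:ℝ)/2 = (2:ℝ)⁻¹ by norm_num]
    exact inv_anti₀ (by norm_num) (by linarith)
  rcases h1 with rfl | rfl <;> rcases h2 with rfl | rfl
  · -- Φ = a - b - c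
    have hPhi : Phi 1 1 (η + σ) η σ = a - b - c := by simp only [Phi]; ring
    have k2 : (2 * b)⁻¹ ≤ b + c - a := by linarith
    have k3 : (2 * c)⁻¹ ≤ b + c - a := by linarith
    have k1 : (2 * a)⁻¹ ≤ b + c - a := by
      rcases le_or_gt b a with h | h
      · have : (2 * a)⁻¹ ≤ (2 * b)⁻¹ := inv_anti₀ (by linarith) (by linarith)
        linarith
      · linarith
    have habs : |Phi 1 1 (η + σ) η σ| = b + c - a := by
      rw [hPhi, abs_of_nonpos (by linarith)]; ring
    refine ⟨?_, ?_⟩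
    · rw [habs]; exact min_inv_bound a b c _ k1 k2 k3
    · rw [hPhi]; intro h; rw [sub_sub] at h; nlinarith
  · -- Φ = a - b + c
    have hPhi : Phi 1 (-1) (η + σ) η σ = a - b + c := by simp only [Phi]; ring
    have k3 : (2 * c)⁻¹ ≤ a + c - b := by linarith
    have k1 : (2 * a)⁻¹ ≤ a + c - b := by linarith
    have k2 : (2 * b)⁻¹ ≤ a + c - b := by
      rcases le_or_gt a b with h | h
      · have : (2 * b)⁻¹ ≤ (2 * a)⁻¹ := inv_anti₀ (by linarith) (by linarith)
        linarith
      · linarith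
    have habs : |Phi 1 (-1) (η + σ) η σ| = a + c - b := by
      rw [hPhi, abs_of_nonneg (by linarith)]; ring
    refine ⟨?_, ?_⟩
    · rw [habs]; exact min_inv_bound a b c _ k1 k2 k3
    · rw [hPhi]; intro h; nlinarith
  · -- Φ = a + b - c
    have hPhi : Phi (-1) 1 (η + σ) η σ = a + b - c := by simp only [Phi]; ring
    have k2 : (2 * b)⁻¹ ≤ a + b - c := by linarith
    have k1 : (2 * a)⁻¹ ≤ a + b - c := by linarith
    have k3 : (2 * c)⁻¹ ≤ a + b - c := by
      rcases le_or_gt a c with h | h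
      · have : (2 * c)⁻¹ ≤ (2 * a)⁻¹ := inv_anti₀ (by linarith) (by linarith)
        linarith
      · linarith
    have habs : |Phi (-1) 1 (η + σ) η σ| = a + b - c := by
      rw [hPhi, abs_of_nonneg (by linarith)]
    refine ⟨?_, ?_⟩
    · rw [habs]; exact min_inv_bound a b c _ k1 k2 k3
    · rw [hPhi]; intro h; nlinarith
  · -- Φ = a + b + c
    have hPhi : Phi (-1) (-1) (η + σ) η σ = a + b + c := by simp only [Phi]; ring
    have k1 : (2 * a)⁻¹ ≤ a + b + c := by linarith
    have k2 : (2 * b)⁻¹ ≤ a + b + c := by linarith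
    have k3 : (2 * c)⁻¹ ≤ a + b + c := by linarith
    have habs : |Phi (-1) (-1) (η + σ) η σ| = a + b + c := by
      rw [hPhi, abs_of_nonneg (by linarith)]
    refine ⟨?_, ?_⟩
    · rw [habs]; exact min_inv_bound a b c _ k1 k2 k3
    · rw [hPhi]; intro h; nlinarith
end

section
/- There exist constants κ > 0 and C > 0 such that for every choice of signs ι₁, ι₂ ∈ {+1, −1} and all ξ, η, σ ∈ ℝ with |ξ − η − σ| ≤ κ / R(η,σ), one has |⟨ξ⟩ − ι₁⟨η⟩ − ι₂⟨σ⟩| ≥ (1/C) · (min(⟨ξ⟩, ⟨η⟩, ⟨σ⟩))⁻¹. -/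
/-- `R(η,σ) = ⟨η⟩⟨σ⟩/(⟨η⟩+⟨σ⟩)`, comparable to `min(⟨η⟩,⟨σ⟩)`. -/
noncomputable def Rf (η σ : ℝ) : ℝ := jb η * jb σ / (jb η + jb σ)

lemma jb_le_jb_add_abs_sub (x y : ℝ) : jb x ≤ jb y + |x - y| := by
  have hy : y * (x - y) ≤ jb y * |x - y| := by
    calc y * (x - y) ≤ |y * (x - y)| := le_abs_self _
      _ = |y| * |x - y| := abs_mul _ _
      _ ≤ jb y * |x - y| := mul_le_mul_of_nonneg_right (abs_le_jb y) (abs_nonneg _)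
  rw [jb, Real.sqrt_le_left (by positivity [jb_pos y])]
  nlinarith [jb_sq y, sq_abs (x - y)]

/-- The product `(⟨u⟩⟨v⟩ - uv)(⟨u⟩⟨v⟩ + uv) = ⟨u⟩² + v²` exceeds `⟨u⟩²`, while the second factor
is at most `2⟨u⟩⟨v⟩`. -/
lemma jb_le_two_mul_jb_mul_sub (u v : ℝ) : jb u ≤ 2 * jb v * (jb u * jb v - u * v) := by
  have huv : u * v ≤ jb u * jb v := by
    calc u * v ≤ |u| * |v| := by rw [← abs_mul]; exact le_abs_self _
      _ ≤ jb u * jb v := mul_le_mul (abs_le_jb u) (abs_le_jb v) (abs_nonneg v) (jb_pos u).le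
  have hprod : (jb u * jb v - u * v) * (jb u * jb v + u * v) = jb u ^ 2 + v ^ 2 := by
    linear_combination (jb v ^ 2 - 1) * jb_sq u + (1 + u ^ 2) * jb_sq v
  have hsq : jb u ^ 2 ≤ (jb u * jb v - u * v) * (2 * jb u * jb v) := by
    nlinarith [sub_nonneg.2 huv, sq_nonneg v]
  nlinarith [jb_pos u]

/-- Since `(⟨u⟩ + ⟨v⟩ - ⟨u+v⟩)(⟨u⟩ + ⟨v⟩ + ⟨u+v⟩) = 1 + 2(⟨u⟩⟨v⟩ - uv)`, the gap is controlled by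
`jb_le_two_mul_jb_mul_sub`. -/
lemma one_le_two_mul_jb_mul_gap (u v : ℝ) : 1 ≤ 2 * jb v * (jb u + jb v - jb (u + v)) := by
  have hfactor : (jb u + jb v - jb (u + v)) * (jb u + jb v + jb (u + v)) =
      1 + 2 * (jb u * jb v - u * v) := by
    linear_combination jb_sq u + jb_sq v - jb_sq (u + v)
  have htri : jb (u + v) ≤ jb u + jb v := by
    have := jb_le_jb_add_abs_sub (u + v) u
    rw [add_sub_cancel_left] at this
    linarith [abs_le_jb v]
  have hgap : 0 ≤ jb u + jb v - jb (u + v) := by linarith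
  have key : jb u + jb v ≤ 2 * jb v * (jb u + jb v - jb (u + v)) * (jb u + jb v) :=
    calc jb u + jb v ≤ jb v * (1 + 2 * (jb u * jb v - u * v)) := by
          nlinarith [jb_le_two_mul_jb_mul_sub u v]
      _ = jb v * (jb u + jb v - jb (u + v)) * (jb u + jb v + jb (u + v)) := by
          rw [mul_assoc, hfactor]
      _ ≤ jb v * (jb u + jb v - jb (u + v)) * (2 * (jb u + jb v)) := by
          gcongr
          · exact mul_nonneg (jb_pos v).le hgap
          · linarith
      _ = _ := by ring
  nlinarith [jb_pos u, jb_pos v]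

lemma one_le_two_mul_min_jb_mul_gap (u v : ℝ) :
    1 ≤ 2 * min (jb u) (jb v) * (jb u + jb v - jb (u + v)) := by
  rcases min_choice (jb u) (jb v) with h | h <;> rw [h]
  · simpa only [add_comm u v, add_comm (jb u) (jb v)] using one_le_two_mul_jb_mul_gap v u
  · exact one_le_two_mul_jb_mul_gap u v

lemma one_le_four_mul_min_jb_mul_gap_of_near (p q r : ℝ)
    (hr : |r - (p + q)| * min (jb p) (min (jb q) (jb r)) ≤ 1 / 4) :
    1 ≤ 4 * min (jb p) (min (jb q) (jb r)) * (jb p + jb q - jb r) := by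
  have hm : 1 ≤ min (jb p) (min (jb q) (jb r)) :=
    le_min (one_le_jb p) (le_min (one_le_jb q) (one_le_jb r))
  by_cases hrmin : jb r ≤ min (jb p) (jb q)
  · have : 1 ≤ jb p + jb q - jb r := by
      linarith [one_le_jb p, min_le_right (jb p) (jb q)]
    nlinarith
  · have hmin : min (jb p) (min (jb q) (jb r)) = min (jb p) (jb q) := by
      rw [← min_assoc]; exact min_eq_left (not_le.1 hrmin).le
    rw [hmin] at hr ⊢
    have hshift := jb_le_jb_add_abs_sub r (p + q)
    have hμ : 0 ≤ min (jb p) (jb q) := le_min (jb_pos p).le (jb_pos q).le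
    nlinarith [one_le_two_mul_min_jb_mul_gap p q, mul_le_mul_of_nonneg_left hshift hμ]

lemma one_le_four_mul_min_jb_mul_abs_Phi {ι₁ ι₂ : ℝ} (h₁ : ι₁ = 1 ∨ ι₁ = -1)
    (h₂ : ι₂ = 1 ∨ ι₂ = -1) {ξ η σ : ℝ}
    (hδ : |ξ - η - σ| * min (jb ξ) (min (jb η) (jb σ)) ≤ 1 / 4) :
    1 ≤ 4 * min (jb ξ) (min (jb η) (jb σ)) * |Phi ι₁ ι₂ ξ η σ| := by
  have hm : 1 ≤ min (jb ξ) (min (jb η) (jb σ)) :=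
    le_min (one_le_jb ξ) (le_min (one_le_jb η) (one_le_jb σ))
  rcases h₁ with rfl | rfl <;> rcases h₂ with rfl | rfl <;>
    simp only [Phi, one_mul, neg_one_mul, sub_neg_eq_add]
  · have := one_le_four_mul_min_jb_mul_gap_of_near η σ ξ
      (by rwa [← min_assoc, min_comm, sub_add_eq_sub_sub])
    rw [← min_assoc, min_comm] at this
    nlinarith [neg_abs_le (jb ξ - jb η - jb σ)]
  · have := one_le_four_mul_min_jb_mul_gap_of_near ξ (-σ) η
      (by rwa [jb_neg, min_comm (jb σ), show η - (ξ + -σ) = -(ξ - η - σ) by ring, abs_neg])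
    rw [jb_neg, min_comm (jb σ)] at this
    nlinarith [le_abs_self (jb ξ - jb η + jb σ)]
  · have := one_le_four_mul_min_jb_mul_gap_of_near ξ (-η) σ
      (by rwa [jb_neg, show σ - (ξ + -η) = -(ξ - η - σ) by ring, abs_neg])
    rw [jb_neg] at this
    nlinarith [le_abs_self (jb ξ + jb η - jb σ)]
  · have hΦ : 1 ≤ |jb ξ + jb η + jb σ| := by
      rw [abs_of_pos (by linarith [jb_pos ξ, jb_pos η, jb_pos σ])]
      linarith [one_le_jb ξ, jb_pos η, jb_pos σ]
    nlinarith [mul_le_mul hm hΦ zero_le_one (by linarith)]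

lemma min_le_two_mul_mul_div_add {x y : ℝ} (hx : 0 < x) (hy : 0 < y) :
    min x y ≤ 2 * (x * y / (x + y)) := by
  rw [mul_div_assoc', le_div_iff₀ (by positivity)]
  rcases le_total x y with h | h
  · rw [min_eq_left h]; nlinarith
  · rw [min_eq_right h]; nlinarith

/-- The nonresonance lower bound for the Klein–Gordon phase persists when `ξ` is
within distance `κ/R(η,σ)` of `η + σ`. -/
theorem phase_nonresonant_near_diagonal :
    ∃ κ C : ℝ, 0 < κ ∧ 0 < C ∧
      ∀ ι₁ ι₂ : ℝ, (ι₁ = 1 ∨ ι₁ = -1) → (ι₂ = 1 ∨ ι₂ = -1) →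
        ∀ ξ η σ : ℝ, |ξ - η - σ| ≤ κ / Rf η σ →
          (1 / C) * (min (jb ξ) (min (jb η) (jb σ)))⁻¹ ≤ |Phi ι₁ ι₂ ξ η σ| := by
  refine ⟨1 / 8, 4, by norm_num, by norm_num, fun ι₁ ι₂ h₁ h₂ ξ η σ hδ => ?_⟩
  have hR : 0 < Rf η σ := by unfold Rf; have := jb_pos η; have := jb_pos σ; positivity
  have hm : 0 < min (jb ξ) (min (jb η) (jb σ)) := lt_min (jb_pos ξ) (lt_min (jb_pos η) (jb_pos σ))
  have hnear : |ξ - η - σ| * min (jb ξ) (min (jb η) (jb σ)) ≤ 1 / 4 :=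
    calc |ξ - η - σ| * min (jb ξ) (min (jb η) (jb σ))
        ≤ 1 / 8 / Rf η σ * (2 * Rf η σ) :=
          mul_le_mul hδ ((min_le_right _ _).trans
            (min_le_two_mul_mul_div_add (jb_pos η) (jb_pos σ))) hm.le (by positivity)
      _ = 1 / 4 := by field_simp; norm_num
  rw [← one_div, one_div_mul_one_div, div_le_iff₀ (by positivity)]
  linarith [one_le_four_mul_min_jb_mul_abs_Phi h₁ h₂ hnear]
end

section
/- Let Φ₁(ξ,η,σ) := ⟨ξ⟩ − ⟨η⟩ + ⟨σ⟩ − ⟨ξ−η+σ⟩. Then for all (ξ,η,σ) ∈ ℝ³ one has the identity ⟨ξ⟩·∂_ξΦ₁(ξ,η,σ) + ⟨η⟩·∂_ηΦ₁(ξ,η,σ) + ⟨σ⟩·∂_σΦ₁(ξ,η,σ) = −((ξ−η+σ)/⟨ξ−η+σ⟩)·Φ₁(ξ,η,σ). -/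
/-- The phase of the resonant `(+,−,+)` cubic Klein–Gordon interaction:
`Φ₁(ξ,η,σ) = ⟨ξ⟩ − ⟨η⟩ + ⟨σ⟩ − ⟨ξ−η+σ⟩`. -/
noncomputable def Phi₁ (ξ η σ : ℝ) : ℝ := jb ξ - jb η + jb σ - jb (ξ - η + σ)

lemma jb_mul_div_jb (x : ℝ) : jb x * (x / jb x) = x :=
  mul_div_cancel₀ x (jb_pos x).ne'

lemma hasDerivAt_jb (x : ℝ) : HasDerivAt jb (x / jb x) x := by
  have hsq : HasDerivAt (fun y : ℝ => 1 + y ^ 2) (2 * x) x := by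
    simpa using (hasDerivAt_pow 2 x).const_add 1
  refine ((Real.hasDerivAt_sqrt (by positivity)).comp x hsq).congr_deriv ?_
  have := (jb_pos x).ne'
  unfold jb at *
  field_simp

lemma HasDerivAt.jb {f : ℝ → ℝ} {f' x : ℝ} (hf : HasDerivAt f f' x) :
    HasDerivAt (fun y => jb (f y)) (f x / jb (f x) * f') x :=
  (hasDerivAt_jb (f x)).comp x hf

section partialDerivs

variable (ξ η σ : ℝ)

lemma hasDerivAt_Phi₁_fst :
    HasDerivAt (fun x => Phi₁ x η σ) (ξ / jb ξ - (ξ - η + σ) / jb (ξ - η + σ)) ξ := by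
  have hs := (((hasDerivAt_id ξ).sub_const η).add_const σ).jb
  refine ((((hasDerivAt_jb ξ).sub_const (jb η)).add_const (jb σ)).sub hs).congr_deriv ?_
  simp only [id, mul_one]

lemma hasDerivAt_Phi₁_snd :
    HasDerivAt (fun y => Phi₁ ξ y σ) (-(η / jb η) + (ξ - η + σ) / jb (ξ - η + σ)) η := by
  have hs := (((hasDerivAt_id η).const_sub ξ).add_const σ).jb
  refine ((((hasDerivAt_jb η).const_sub (jb ξ)).add_const (jb σ)).sub hs).congr_deriv ?_
  simp only [id]
  ring

lemma hasDerivAt_Phi₁_thd :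
    HasDerivAt (fun z => Phi₁ ξ η z) (σ / jb σ - (ξ - η + σ) / jb (ξ - η + σ)) σ := by
  have hs := ((hasDerivAt_id σ).const_add (ξ - η)).jb
  refine (((hasDerivAt_jb σ).const_add (jb ξ - jb η)).sub hs).congr_deriv ?_
  simp only [id, mul_one]

end partialDerivs

/-- The vector-field identity for the cubic phase:
`⟨ξ⟩∂_ξΦ₁ + ⟨η⟩∂_ηΦ₁ + ⟨σ⟩∂_σΦ₁ = −((ξ−η+σ)/⟨ξ−η+σ⟩)·Φ₁`. -/
theorem vector_field_identity_cubic (ξ η σ : ℝ) :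
    jb ξ * deriv (fun x => Phi₁ x η σ) ξ +
        jb η * deriv (fun y => Phi₁ ξ y σ) η +
        jb σ * deriv (fun z => Phi₁ ξ η z) σ =
      -((ξ - η + σ) / jb (ξ - η + σ)) * Phi₁ ξ η σ := by
  rw [(hasDerivAt_Phi₁_fst ξ η σ).deriv, (hasDerivAt_Phi₁_snd ξ η σ).deriv,
    (hasDerivAt_Phi₁_thd ξ η σ).deriv, Phi₁]
  linear_combination jb_mul_div_jb ξ - jb_mul_div_jb η + jb_mul_div_jb σ
    - jb_mul_div_jb (ξ - η + σ)
end

section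
/- Let ξ ∈ ℝ, ξ ≠ 0, and let V : ℝ → ℝ be continuous. Suppose f₊, f₋ : ℝ → ℂ are twice continuously differentiable solutions of −f'' + V·f = ξ²·f on ℝ, with the asymptotics f₊(x)e^{−iξx} → 1 and f₊'(x)e^{−iξx} → iξ as x → +∞, and f₋(x)e^{iξx} → 1 and f₋'(x)e^{iξx} → −iξ as x → −∞. Suppose there exist T₊, T₋ ∈ ℂ ∖ {0} and R₊, R₋ ∈ ℂ such that f₊ = (1/T₊)·conj(f₋) + (R₋/T₊)·f₋ and f₋ = (1/T₋)·conj(f₊) + (R₊/T₋)·f₊ on ℝ. Then T₊ = T₋ =: T, and |T|² + |R₊|² = 1, |T|² + |R₋|² = 1, and T·conj(R₋) + R₊·conj(T) = 0; equivalently, the 2×2 matrix S = [[T, R₊],[R₋, T]] is unitary. -/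
/-!
Since `V` and `ξ²` are real, `conj f` solves `-f'' + V f = ξ² f` whenever `f` does, and the
Wronskian `W(f, g) = f' g - f g'` of two solutions is constant. Reading it off at `±∞` gives
`W(f₊, conj f₊) = 2iξ` and `W(f₋, conj f₋) = -2iξ`. Substituting the connection formulas into
`W(f₊, f₋)`, `W(T₊ f₊, conj (T₊ f₊))`, `W(T₋ f₋, conj (T₋ f₋))` and `W(f₊, conj f₋)` and expanding
by bilinearity yields `T₊ = T₋`, the two norm identities and the cross relation. These
identities only involve values and derivatives at a single point, so they are stated for
1-jets `(f x, f' x) ∈ ℂ × ℂ`.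
-/

open Filter Topology ComplexConjugate

namespace Scattering

def wronskian (p q : ℂ × ℂ) : ℂ := p.2 * q.1 - p.1 * q.2

noncomputable def jet (f : ℝ → ℂ) (x : ℝ) : ℂ × ℂ := (f x, deriv f x)

@[simp] lemma wronskian_smul_left (c : ℂ) (p q : ℂ × ℂ) :
    wronskian (c • p) q = c * wronskian p q := by
  simp only [wronskian, Prod.smul_fst, Prod.smul_snd, smul_eq_mul]; ring

@[simp] lemma wronskian_smul_right (c : ℂ) (p q : ℂ × ℂ) :
    wronskian p (c • q) = c * wronskian p q := by
  simp only [wronskian, Prod.smul_fst, Prod.smul_snd, smul_eq_mul]; ring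

@[simp] lemma wronskian_add_left (p p' q : ℂ × ℂ) :
    wronskian (p + p') q = wronskian p q + wronskian p' q := by
  simp only [wronskian, Prod.fst_add, Prod.snd_add]; ring

@[simp] lemma wronskian_add_right (p q q' : ℂ × ℂ) :
    wronskian p (q + q') = wronskian p q + wronskian p q' := by
  simp only [wronskian, Prod.fst_add, Prod.snd_add]; ring

@[simp] lemma wronskian_self (p : ℂ × ℂ) : wronskian p p = 0 := by
  simp only [wronskian]; ring

lemma wronskian_swap (p q : ℂ × ℂ) : wronskian q p = -wronskian p q := by
  simp only [wronskian]; ring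

section Connection

variable {p m : ℂ × ℂ} {k Tp Tm Rp Rm : ℂ}

lemma eq_of_connection (hk : k ≠ 0) (hp : wronskian p (star p) = k)
    (hm : wronskian m (star m) = -k) (hA : Tp • p = star m + Rm • m)
    (hB : Tm • m = star p + Rp • p) : Tp = Tm := by
  have hTm : Tm * wronskian p m = k := by
    rw [← wronskian_smul_right, hB]; simp [hp]
  have hTp : Tp * wronskian p m = k := by
    rw [← wronskian_smul_left, hA]; simp [wronskian_swap m (star m), hm]
  have hW : wronskian p m ≠ 0 := right_ne_zero_of_mul (hTp ▸ hk)
  exact mul_right_cancel₀ hW (hTp.trans hTm.symm)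

lemma norm_sq_add_norm_sq_of_connection (hk : k ≠ 0) (hp : wronskian p (star p) = k)
    (hm : wronskian m (star m) = -k) (hA : Tp • p = star m + Rm • m) :
    ‖Tp‖ ^ 2 + ‖Rm‖ ^ 2 = 1 := by
  have h : (Tp * conj Tp) * k = k - (Rm * conj Rm) * k := by
    calc (Tp * conj Tp) * k = wronskian (Tp • p) (star (Tp • p)) := by
          rw [star_smul]; simp [hp]; ring
      _ = k - (Rm * conj Rm) * k := by
          rw [hA, star_add, star_smul, star_star]
          simp [wronskian_swap m (star m), hm]; ring
  have h' : Tp * conj Tp + Rm * conj Rm = 1 :=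
    mul_right_cancel₀ hk (by linear_combination h)
  rw [Complex.mul_conj', Complex.mul_conj'] at h'
  exact_mod_cast h'

lemma mul_conj_add_mul_conj_of_connection (hk : k ≠ 0) (hp : wronskian p (star p) = k)
    (hm : wronskian m (star m) = -k) (hA : Tp • p = star m + Rm • m)
    (hB : Tm • m = star p + Rp • p) : Tm * conj Rm + Rp * conj Tp = 0 := by
  have hTp : Tp * wronskian p (star m) = -(Rm * k) := by
    rw [← wronskian_smul_left, hA]; simp [hm]
  have hTm : conj Tm * wronskian p (star m) = conj Rp * k := by
    simpa [star_smul, hp] using congrArg (fun q => wronskian p (star q)) hB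
  have h : (conj Tm * Rm + Tp * conj Rp) * k = 0 := by
    linear_combination conj Tm * hTp - Tp * hTm
  have h' := congrArg conj ((mul_eq_zero.mp h).resolve_right hk)
  simp only [map_add, map_mul, Complex.conj_conj, map_zero] at h'
  linear_combination h'

end Connection

lemma mem_unitaryGroup_fin_two {T Rp Rm : ℂ} (hRp : ‖T‖ ^ 2 + ‖Rp‖ ^ 2 = 1)
    (hRm : ‖T‖ ^ 2 + ‖Rm‖ ^ 2 = 1) (hcross : T * conj Rm + Rp * conj T = 0) :
    !![T, Rp; Rm, T] ∈ Matrix.unitaryGroup (Fin 2) ℂ := by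
  have hRp' : T * conj T + Rp * conj Rp = 1 := by
    rw [Complex.mul_conj', Complex.mul_conj']; exact_mod_cast hRp
  have hRm' : Rm * conj Rm + T * conj T = 1 := by
    rw [Complex.mul_conj', Complex.mul_conj']; exact_mod_cast (add_comm _ _).trans hRm
  have hcross' : Rm * conj T + T * conj Rp = 0 := by
    simpa [mul_comm] using congrArg conj hcross
  rw [Matrix.mem_unitaryGroup_iff]
  ext i j
  fin_cases i <;> fin_cases j <;>
    simp [Matrix.mul_apply, Matrix.star_apply, hRp', hRm', hcross, hcross']

lemma jet_conj (f : ℝ → ℂ) (x : ℝ) : jet (fun y => conj (f y)) x = star (jet f x) := by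
  simp only [jet, starRingEnd_apply, deriv.star]; rfl

lemma deriv_deriv_conj {q : ℝ → ℝ} {f : ℝ → ℂ} (h : ∀ x, deriv (deriv f) x = q x * f x)
    (x : ℝ) : deriv (deriv fun y => conj (f y)) x = q x * conj (f x) := by
  simp only [starRingEnd_apply, deriv.star', h, star_mul']
  rw [Complex.star_def, Complex.conj_ofReal]

lemma wronskian_jet_eq_of_deriv_deriv {q : ℝ → ℂ} {f g : ℝ → ℂ}
    (hf : Differentiable ℝ f) (hf' : Differentiable ℝ (deriv f))
    (hg : Differentiable ℝ g) (hg' : Differentiable ℝ (deriv g))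
    (hf'' : ∀ x, deriv (deriv f) x = q x * f x) (hg'' : ∀ x, deriv (deriv g) x = q x * g x)
    (x y : ℝ) : wronskian (jet f x) (jet g x) = wronskian (jet f y) (jet g y) := by
  have h : ∀ t, HasDerivAt (fun t => wronskian (jet f t) (jet g t)) 0 t := by
    intro t
    exact (((hf' t).hasDerivAt.mul (hg t).hasDerivAt).sub
      ((hf t).hasDerivAt.mul (hg' t).hasDerivAt)).congr_deriv (by rw [hf'', hg'']; ring)
  exact is_const_of_deriv_eq_zero (fun t => (h t).differentiableAt) (fun t => (h t).deriv) x y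

lemma wronskian_jet_conj_eq_of_tendsto {q : ℝ → ℝ} {f : ℝ → ℂ} (hf : Differentiable ℝ f)
    (hf' : Differentiable ℝ (deriv f)) (hf'' : ∀ x, deriv (deriv f) x = q x * f x)
    {l : Filter ℝ} [l.NeBot] {c : ℂ}
    (hc : Tendsto (fun x => wronskian (jet f x) (star (jet f x))) l (𝓝 c)) (x : ℝ) :
    wronskian (jet f x) (star (jet f x)) = c := by
  have hconj : Differentiable ℝ fun y => conj (f y) := by
    simpa only [starRingEnd_apply] using hf.star
  have hconj' : Differentiable ℝ (deriv fun y => conj (f y)) := by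
    simpa only [starRingEnd_apply, deriv.star'] using hf'.star
  have hconst (y : ℝ) :
      wronskian (jet f y) (star (jet f y)) = wronskian (jet f x) (star (jet f x)) := by
    simpa only [jet_conj] using wronskian_jet_eq_of_deriv_deriv (q := fun x => q x)
      hf hf' hconj hconj' hf'' (deriv_deriv_conj hf'') y x
  exact tendsto_nhds_unique (tendsto_const_nhds.congr fun y => (hconst y).symm) hc

lemma tendsto_wronskian_jet_conj {l : Filter ℝ} {f u : ℝ → ℂ} (hu : ∀ x, ‖u x‖ = 1) {a b : ℂ}
    (h0 : Tendsto (fun x => f x * u x) l (𝓝 a))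
    (h1 : Tendsto (fun x => deriv f x * u x) l (𝓝 b)) :
    Tendsto (fun x => wronskian (jet f x) (star (jet f x))) l (𝓝 (b * conj a - a * conj b)) := by
  refine ((h1.mul h0.star).sub (h0.mul h1.star)).congr fun x => ?_
  have hu' : u x * conj (u x) = 1 := by rw [Complex.mul_conj', hu]; simp
  simp only [wronskian, jet, Prod.fst_star, Prod.snd_star, Complex.star_def, map_mul]
  linear_combination (deriv f x * conj (f x) - f x * conj (deriv f x)) * hu'

lemma smul_jet_eq_of_connection {f g : ℝ → ℂ} (hg : Differentiable ℝ g) {c d : ℂ}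
    (h : ∀ x, c * f x = conj (g x) + d * g x) (x : ℝ) :
    c • jet f x = star (jet g x) + d • jet g x := by
  have hderiv : c * deriv f x = conj (deriv g x) + d * deriv g x := by
    calc c * deriv f x = deriv (fun y => c * f y) x := (deriv_const_mul_field c).symm
      _ = deriv (fun y => conj (g y) + d * g y) x := by rw [funext h]
      _ = conj (deriv g x) + d * deriv g x := by
        simp only [starRingEnd_apply]
        exact ((hg x).hasDerivAt.star.add ((hg x).hasDerivAt.const_mul d)).deriv
  ext
  · simpa [jet] using h x
  · simpa [jet] using hderiv

end Scattering

open Scattering Complex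

theorem scattering_matrix_unitary_general
    (ξ : ℝ) (hξ : ξ ≠ 0) (V : ℝ → ℝ)
    (fp fm : ℝ → ℂ) (hfp : ContDiff ℝ 2 fp) (hfm : ContDiff ℝ 2 fm)
    (heqp : ∀ x : ℝ, -deriv (deriv fp) x + (V x : ℂ) * fp x = (ξ : ℂ) ^ 2 * fp x)
    (heqm : ∀ x : ℝ, -deriv (deriv fm) x + (V x : ℂ) * fm x = (ξ : ℂ) ^ 2 * fm x)
    (hp0 : Tendsto (fun x : ℝ => fp x * Complex.exp (-(Complex.I * ξ * x)))
      atTop (nhds 1))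
    (hp1 : Tendsto (fun x : ℝ => deriv fp x * Complex.exp (-(Complex.I * ξ * x)))
      atTop (nhds (Complex.I * ξ)))
    (hm0 : Tendsto (fun x : ℝ => fm x * Complex.exp (Complex.I * ξ * x))
      atBot (nhds 1))
    (hm1 : Tendsto (fun x : ℝ => deriv fm x * Complex.exp (Complex.I * ξ * x))
      atBot (nhds (-(Complex.I * ξ))))
    (Tp Tm Rp Rm : ℂ) (hTp : Tp ≠ 0) (hTm : Tm ≠ 0)
    (hconnp : ∀ x : ℝ,
      fp x = (1 / Tp) * (starRingEnd ℂ) (fm x) + (Rm / Tp) * fm x)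
    (hconnm : ∀ x : ℝ,
      fm x = (1 / Tm) * (starRingEnd ℂ) (fp x) + (Rp / Tm) * fp x) :
    Tp = Tm ∧
    ‖Tp‖ ^ 2 + ‖Rp‖ ^ 2 = 1 ∧
    ‖Tp‖ ^ 2 + ‖Rm‖ ^ 2 = 1 ∧
    Tp * (starRingEnd ℂ) Rm + Rp * (starRingEnd ℂ) Tp = 0 ∧
    !![Tp, Rp; Rm, Tp] ∈ Matrix.unitaryGroup (Fin 2) ℂ := by
  have hk : 2 * I * ξ ≠ 0 := by simp [hξ]
  have hWp : wronskian (jet fp 0) (star (jet fp 0)) = 2 * I * ξ := by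
    refine wronskian_jet_conj_eq_of_tendsto (q := fun x => V x - ξ ^ 2) (l := atTop)
      (hfp.differentiable two_ne_zero) hfp.differentiable_deriv_two
      (fun x => by push_cast; linear_combination -heqp x) ?_ 0
    convert tendsto_wronskian_jet_conj (fun x => by simp [norm_exp]) hp0 hp1 using 2
    simp; ring
  have hWm : wronskian (jet fm 0) (star (jet fm 0)) = -(2 * I * ξ) := by
    refine wronskian_jet_conj_eq_of_tendsto (q := fun x => V x - ξ ^ 2) (l := atBot)
      (hfm.differentiable two_ne_zero) hfm.differentiable_deriv_two
      (fun x => by push_cast; linear_combination -heqm x) ?_ 0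
    convert tendsto_wronskian_jet_conj (fun x => by simp [norm_exp]) hm0 hm1 using 2
    simp; ring
  have hA : Tp • jet fp 0 = star (jet fm 0) + Rm • jet fm 0 :=
    smul_jet_eq_of_connection (hfm.differentiable two_ne_zero)
      (fun x => by rw [hconnp x]; field_simp) 0
  have hB : Tm • jet fm 0 = star (jet fp 0) + Rp • jet fp 0 :=
    smul_jet_eq_of_connection (hfp.differentiable two_ne_zero)
      (fun x => by rw [hconnm x]; field_simp) 0
  obtain rfl : Tp = Tm := eq_of_connection hk hWp hWm hA hB
  have hRm := norm_sq_add_norm_sq_of_connection hk hWp hWm hA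
  have hRp := norm_sq_add_norm_sq_of_connection (neg_ne_zero.2 hk) hWm (by rwa [neg_neg]) hB
  have hcross := mul_conj_add_mul_conj_of_connection hk hWp hWm hA hB
  exact ⟨rfl, hRp, hRm, hcross, mem_unitaryGroup_fin_two hRp hRm hcross⟩

/-- Unitarity of the scattering matrix: if the Jost solutions `f₊, f₋` of
`−f'' + V f = ξ² f` satisfy the two connection formulas with coefficients
`(T₊, R₋)` and `(T₋, R₊)`, then `T₊ = T₋ =: T`, `|T|² + |R₊|² = 1`,
`|T|² + |R₋|² = 1`, `T·conj(R₋) + R₊·conj(T) = 0`; equivalently, the matrix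
`S = [[T, R₊],[R₋, T]]` is unitary. -/
theorem scattering_matrix_unitary
    (ξ : ℝ) (hξ : ξ ≠ 0) (V : ℝ → ℝ) (hV : Continuous V)
    (fp fm : ℝ → ℂ) (hfp : ContDiff ℝ 2 fp) (hfm : ContDiff ℝ 2 fm)
    (heqp : ∀ x : ℝ, -deriv (deriv fp) x + (V x : ℂ) * fp x = (ξ : ℂ) ^ 2 * fp x)
    (heqm : ∀ x : ℝ, -deriv (deriv fm) x + (V x : ℂ) * fm x = (ξ : ℂ) ^ 2 * fm x)
    (hp0 : Tendsto (fun x : ℝ => fp x * Complex.exp (-(Complex.I * ξ * x)))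
      atTop (nhds 1))
    (hp1 : Tendsto (fun x : ℝ => deriv fp x * Complex.exp (-(Complex.I * ξ * x)))
      atTop (nhds (Complex.I * ξ)))
    (hm0 : Tendsto (fun x : ℝ => fm x * Complex.exp (Complex.I * ξ * x))
      atBot (nhds 1))
    (hm1 : Tendsto (fun x : ℝ => deriv fm x * Complex.exp (Complex.I * ξ * x))
      atBot (nhds (-(Complex.I * ξ))))
    (Tp Tm Rp Rm : ℂ) (hTp : Tp ≠ 0) (hTm : Tm ≠ 0)
    (hconnp : ∀ x : ℝ,
      fp x = (1 / Tp) * (starRingEnd ℂ) (fm x) + (Rm / Tp) * fm x)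
    (hconnm : ∀ x : ℝ,
      fm x = (1 / Tm) * (starRingEnd ℂ) (fp x) + (Rp / Tm) * fp x) :
    Tp = Tm ∧
    ‖Tp‖ ^ 2 + ‖Rp‖ ^ 2 = 1 ∧
    ‖Tp‖ ^ 2 + ‖Rm‖ ^ 2 = 1 ∧
    Tp * (starRingEnd ℂ) Rm + Rp * (starRingEnd ℂ) Tp = 0 ∧
    !![Tp, Rp; Rm, Tp] ∈ Matrix.unitaryGroup (Fin 2) ℂ :=
  scattering_matrix_unitary_general ξ hξ V fp fm hfp hfm heqp heqm hp0 hp1 hm0 hm1 Tp Tm Rp Rm hTp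
    hTm hconnp hconnm
end

section
/- Let c ∈ ℝ, δ > 0, ε ≥ 0, and let z : [0,∞) → ℂ be continuously differentiable and R : [0,∞) → ℂ continuous, with z'(t) = −(i c/(t+1))·|z(t)|²·z(t) + R(t) and |R(t)| ≤ ε·(1+t)^{−1−δ} for all t ≥ 0. Define W(t) := exp( i c ∫₀^t |z(s)|²/(s+1) ds ) · z(t). Then: (i) |W(t)| = |z(t)| for all t ≥ 0; (ii) |W'(t)| ≤ ε·(1+t)^{−1−δ} for all t ≥ 0; (iii) there exists W∞ ∈ ℂ such that |W(t) − W∞| ≤ (ε/δ)·(1+t)^{−δ} for all t ≥ 0; in particular | |z(t)| − |W∞| | ≤ (ε/δ)·(1+t)^{−δ} for all t ≥ 0. -/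
/-!
Since `θ(t) = ∫₀^t |z|²/(s+1)` has `θ' = |z|²/(t+1)`, the phase factor `exp(icθ)` has
modulus one and its derivative exactly cancels the cubic term, so `W' = exp(icθ) R`.
Comparing `W(t) - W(a)` with the boundary function `(ε/δ)((1+a)^{-δ} - (1+t)^{-δ})`, whose
derivative dominates `‖W'‖`, gives `‖W b - W a‖ ≤ (ε/δ)((1+a)^{-δ} - (1+b)^{-δ})`; hence `W`
is Cauchy at infinity and its limit `W∞` is approached at the rate `(ε/δ)(1+t)^{-δ}`, which
`|W| = |z|` transfers to `|z|`.
-/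

open Filter

/-- The modified profile `W(t) = exp(i c ∫₀^t |z(s)|²/(s+1) ds) · z(t)`. -/
noncomputable def Wmod (c : ℝ) (z : ℝ → ℂ) (t : ℝ) : ℂ :=
  Complex.exp (Complex.I * (c : ℂ) *
    ((∫ s in (0 : ℝ)..t, ‖z s‖ ^ 2 / (s + 1)) : ℝ)) * z t

open Set Topology Complex

section

variable {E : Type*} [NormedAddCommGroup E]

theorem norm_sub_le_sub_of_norm_deriv_le_neg_deriv [NormedSpace ℝ E] {f f' : ℝ → E}
    {G G' : ℝ → ℝ} {t₀ a b : ℝ}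
    (hf : ∀ t ∈ Ici t₀, HasDerivWithinAt f (f' t) (Ici t₀) t)
    (hG : ∀ t ∈ Ici t₀, HasDerivWithinAt G (G' t) (Ici t₀) t)
    (hbound : ∀ t ∈ Ici t₀, ‖f' t‖ ≤ -G' t) (ha : t₀ ≤ a) (hab : a ≤ b) :
    ‖f b - f a‖ ≤ G a - G b := by
  have hsub : Icc a b ⊆ Ici t₀ := fun x hx => ha.trans hx.1
  have hIci : ∀ x ∈ Ico a b, Ici x ⊆ Ici t₀ := fun x hx => Ici_subset_Ici.2 (ha.trans hx.1)
  refine image_norm_le_of_norm_deriv_right_le_deriv_boundary'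
    (f := fun x => f x - f a) (B := fun x => G a - G x) (B' := fun x => -G' x)
    (fun x hx => ((hf x (hsub hx)).continuousWithinAt.mono hsub).sub continuousWithinAt_const)
    (fun x hx => ((hf x (hsub (Ico_subset_Icc_self hx))).mono (hIci x hx)).sub_const _)
    (by simp)
    (fun x hx => continuousWithinAt_const.sub ((hG x (hsub hx)).continuousWithinAt.mono hsub))
    (fun x hx => ((hG x (hsub (Ico_subset_Icc_self hx))).mono (hIci x hx)).const_sub _)
    (fun x hx => hbound x (hsub (Ico_subset_Icc_self hx))) ⟨hab, le_rfl⟩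

theorem exists_norm_sub_le_of_norm_sub_le_sub [CompleteSpace E] {f : ℝ → E} {G : ℝ → ℝ}
    {t₀ : ℝ} (hfG : ∀ a b, t₀ ≤ a → a ≤ b → ‖f b - f a‖ ≤ G a - G b)
    (hG : Tendsto G atTop (𝓝 0)) :
    ∃ L, ∀ t, t₀ ≤ t → ‖f t - L‖ ≤ G t := by
  have hcauchy : CauchySeq f := by
    refine Metric.cauchySeq_iff'.2 fun r hr => ?_
    obtain ⟨N, hN⟩ := ((hG.eventually (Metric.ball_mem_nhds 0 (half_pos hr))).and
      (eventually_ge_atTop t₀)).exists_forall_of_atTop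
    refine ⟨N, fun n hn => ?_⟩
    have hGN := (hN N le_rfl).1
    have hGn := (hN n hn).1
    simp only [dist_zero_right, Real.norm_eq_abs, abs_lt] at hGN hGn
    rw [dist_eq_norm]
    calc ‖f n - f N‖ ≤ G N - G n := hfG N n (hN N le_rfl).2 hn
      _ < r := by linarith
  obtain ⟨L, hL⟩ := cauchySeq_tendsto_of_complete hcauchy
  refine ⟨L, fun t ht => ?_⟩
  rw [norm_sub_rev, ← sub_zero (G t)]
  exact le_of_tendsto_of_tendsto (hL.sub_const _).norm (tendsto_const_nhds.sub hG)
    ((eventually_ge_atTop t).mono fun b hb => hfG t b ht hb)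

theorem hasDerivAt_one_add_rpow_neg (δ : ℝ) {t : ℝ} (ht : -1 < t) :
    HasDerivAt (fun t : ℝ => (1 + t) ^ (-δ)) (-δ * (1 + t) ^ (-(1 + δ))) t := by
  convert ((hasDerivAt_id' t).const_add 1).rpow_const (p := -δ) (Or.inl (by linarith))
    using 1
  rw [show -δ - 1 = -(1 + δ) by ring]
  ring

theorem tendsto_one_add_rpow_neg_atTop {δ : ℝ} (hδ : 0 < δ) :
    Tendsto (fun t : ℝ => (1 + t) ^ (-δ)) atTop (𝓝 0) :=
  (tendsto_rpow_neg_atTop hδ).comp (tendsto_atTop_add_const_left _ 1 tendsto_id)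

theorem exists_norm_sub_le_of_norm_deriv_le_rpow [NormedSpace ℝ E] [CompleteSpace E]
    {f f' : ℝ → E} {ε δ : ℝ} (hδ : 0 < δ)
    (hf : ∀ t ∈ Ici (0 : ℝ), HasDerivWithinAt f (f' t) (Ici 0) t)
    (hbound : ∀ t ∈ Ici (0 : ℝ), ‖f' t‖ ≤ ε * (1 + t) ^ (-(1 + δ))) :
    ∃ L, ∀ t ∈ Ici (0 : ℝ), ‖f t - L‖ ≤ ε / δ * (1 + t) ^ (-δ) := by
  have hG : ∀ t ∈ Ici (0 : ℝ), HasDerivWithinAt (fun t => ε / δ * (1 + t) ^ (-δ))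
      (-(ε * (1 + t) ^ (-(1 + δ)))) (Ici 0) t := by
    intro t ht
    refine (((hasDerivAt_one_add_rpow_neg δ (t := t) (by linarith [mem_Ici.1 ht])).const_mul
      (ε / δ)).hasDerivWithinAt).congr_deriv ?_
    field_simp
  exact exists_norm_sub_le_of_norm_sub_le_sub
    (fun a b ha hab => norm_sub_le_sub_of_norm_deriv_le_neg_deriv hf hG (by simpa using hbound)
      ha hab)
    (by simpa using (tendsto_one_add_rpow_neg_atTop hδ).const_mul (ε / δ))

theorem ContinuousOn.hasDerivWithinAt_integral_Ici [NormedSpace ℝ E] [CompleteSpace E]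
    {f : ℝ → E} {a t : ℝ} (hf : ContinuousOn f (Ici a)) (ht : a ≤ t) :
    HasDerivWithinAt (fun u => ∫ x in a..u, f x) (f t) (Ici a) t := by
  have hsub : Icc a (t + 1) ⊆ Ici a := Icc_subset_Ici_self
  have : Fact (t ∈ Icc a (t + 1)) := ⟨⟨ht, by linarith⟩⟩
  have hderiv : HasDerivWithinAt (fun u => ∫ x in a..u, f x) (f t) (Icc a (t + 1)) t :=
    intervalIntegral.integral_hasDerivWithinAt_right
      ((hf.mono Icc_subset_Ici_self).intervalIntegrable_of_Icc ht)
      ((hf.mono hsub).stronglyMeasurableAtFilter_nhdsWithin measurableSet_Icc t)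
      ((hf t ht).mono hsub)
  refine hderiv.mono_of_mem_nhdsWithin ?_
  rw [← Ici_inter_Iic]
  exact inter_mem_nhdsWithin _ (Iic_mem_nhds (by linarith))

end

noncomputable def logPhase (z : ℝ → ℂ) (t : ℝ) : ℝ :=
  ∫ s in (0 : ℝ)..t, ‖z s‖ ^ 2 / (s + 1)

theorem Wmod_eq (c : ℝ) (z : ℝ → ℂ) (t : ℝ) :
    Wmod c z t = exp (I * c * logPhase z t) * z t :=
  rfl

theorem norm_exp_I_mul_ofReal_mul_ofReal (c x : ℝ) : ‖exp (I * c * x)‖ = 1 := by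
  rw [show I * (c : ℂ) * x = ((c * x : ℝ) : ℂ) * I by push_cast; ring]
  exact norm_exp_ofReal_mul_I _

theorem norm_Wmod (c : ℝ) (z : ℝ → ℂ) (t : ℝ) : ‖Wmod c z t‖ = ‖z t‖ := by
  rw [Wmod_eq, norm_mul, norm_exp_I_mul_ofReal_mul_ofReal, one_mul]

theorem hasDerivWithinAt_Wmod {c : ℝ} {z R : ℝ → ℂ}
    (hz : ∀ t ∈ Ici (0 : ℝ), HasDerivWithinAt z
      (-(I * c / (t + 1)) * ((‖z t‖ ^ 2 : ℝ) : ℂ) * z t + R t) (Ici 0) t)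
    {t : ℝ} (ht : t ∈ Ici 0) :
    HasDerivWithinAt (Wmod c z) (exp (I * c * logPhase z t) * R t) (Ici 0) t := by
  have hz_cont : ContinuousOn z (Ici 0) := fun s hs => (hz s hs).continuousWithinAt
  have hpos : ∀ s ∈ Ici (0 : ℝ), s + 1 ≠ 0 := fun s hs => by linarith [mem_Ici.1 hs]
  have hphase : HasDerivWithinAt (logPhase z) (‖z t‖ ^ 2 / (t + 1)) (Ici 0) t :=
    ContinuousOn.hasDerivWithinAt_integral_Ici
      ((hz_cont.norm.pow 2).div (continuousOn_id.add continuousOn_const) hpos) ht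
  refine HasDerivWithinAt.congr_deriv (f := Wmod c z)
    ((hphase.ofReal_comp.const_mul (I * c)).cexp.mul (hz t ht)) ?_
  push_cast
  ring

theorem modified_scattering_ode_general
    (c δ ε : ℝ) (hδ : 0 < δ)
    (z R : ℝ → ℂ)
    (hz : ∀ t ∈ Set.Ici (0 : ℝ),
      HasDerivWithinAt z
        (-(Complex.I * (c : ℂ) / ((t : ℂ) + 1)) * ((‖z t‖ ^ 2 : ℝ) : ℂ) * z t + R t)
        (Set.Ici 0) t)
    (hRbound : ∀ t ∈ Set.Ici (0 : ℝ), ‖R t‖ ≤ ε * (1 + t) ^ (-(1 + δ))) :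
    (∀ t ∈ Set.Ici (0 : ℝ), ‖Wmod c z t‖ = ‖z t‖) ∧
    (∀ t ∈ Set.Ici (0 : ℝ),
      ‖derivWithin (Wmod c z) (Set.Ici 0) t‖ ≤ ε * (1 + t) ^ (-(1 + δ))) ∧
    ∃ Winf : ℂ, ∀ t ∈ Set.Ici (0 : ℝ),
      ‖Wmod c z t - Winf‖ ≤ ε / δ * (1 + t) ^ (-δ) ∧
      |‖z t‖ - ‖Winf‖| ≤ ε / δ * (1 + t) ^ (-δ) := by
  have hW := fun t (ht : t ∈ Ici (0 : ℝ)) => hasDerivWithinAt_Wmod hz ht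
  have hW' : ∀ t ∈ Ici (0 : ℝ),
      ‖exp (I * c * logPhase z t) * R t‖ ≤ ε * (1 + t) ^ (-(1 + δ)) :=
    fun t ht => by rw [norm_mul, norm_exp_I_mul_ofReal_mul_ofReal, one_mul]; exact hRbound t ht
  obtain ⟨Winf, hWinf⟩ := exists_norm_sub_le_of_norm_deriv_le_rpow hδ hW hW'
  refine ⟨fun t _ => norm_Wmod c z t, fun t ht => ?_, Winf, fun t ht => ⟨hWinf t ht, ?_⟩⟩
  · rw [(hW t ht).derivWithin (uniqueDiffOn_Ici 0 t ht)]
    exact hW' t ht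
  · rw [← norm_Wmod c z t]
    exact (abs_norm_sub_norm_le _ _).trans (hWinf t ht)

/-- The modified-scattering ODE lemma: if `z' = −(ic/(t+1))|z|²z + R` on `[0,∞)`
with `|R(t)| ≤ ε(1+t)^{−1−δ}`, then the modified profile `W` has the same modulus
as `z`, satisfies `|W'(t)| ≤ ε(1+t)^{−1−δ}`, and converges to some `Winf` at the
rate `(ε/δ)(1+t)^{−δ}`; in particular `||z(t)| − |Winf|| ≤ (ε/δ)(1+t)^{−δ}`. -/
theorem modified_scattering_ode
    (c δ ε : ℝ) (hδ : 0 < δ) (hε : 0 ≤ ε)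
    (z R : ℝ → ℂ) (hR : ContinuousOn R (Set.Ici 0))
    (hz : ∀ t ∈ Set.Ici (0 : ℝ),
      HasDerivWithinAt z
        (-(Complex.I * (c : ℂ) / ((t : ℂ) + 1)) * ((‖z t‖ ^ 2 : ℝ) : ℂ) * z t + R t)
        (Set.Ici 0) t)
    (hRbound : ∀ t ∈ Set.Ici (0 : ℝ), ‖R t‖ ≤ ε * (1 + t) ^ (-(1 + δ))) :
    (∀ t ∈ Set.Ici (0 : ℝ), ‖Wmod c z t‖ = ‖z t‖) ∧
    (∀ t ∈ Set.Ici (0 : ℝ),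
      ‖derivWithin (Wmod c z) (Set.Ici 0) t‖ ≤ ε * (1 + t) ^ (-(1 + δ))) ∧
    ∃ Winf : ℂ, ∀ t ∈ Set.Ici (0 : ℝ),
      ‖Wmod c z t - Winf‖ ≤ ε / δ * (1 + t) ^ (-δ) ∧
      |‖z t‖ - ‖Winf‖| ≤ ε / δ * (1 + t) ^ (-δ) :=
  modified_scattering_ode_general c δ ε hδ z R hz hRbound
end

section
/- Let P : ℝ → ℝ be continuously differentiable, λ ∈ ℝ, and φ : ℝ → ℝ twice continuously differentiable with φ''(x) = (P(x) − λ)·φ(x) for all x ∈ ℝ. Assume φ ∈ L²(ℝ) and φ' ∈ L²(ℝ); the functions x ↦ (P(x)−λ)·φ(x)² and x ↦ x·P'(x)·φ(x)² are integrable on ℝ; and the boundary terms vanish: φ(x)·φ'(x) → 0, x·(φ'(x))² → 0, and x·(P(x)−λ)·φ(x)² → 0 as x → +∞ and as x → −∞. Then 2·∫_ℝ (φ'(x))² dx = ∫_ℝ x·P'(x)·φ(x)² dx. -/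
/-!
The flux `F = x φ'² − x (P − λ) φ² + φ φ'` is the combination of the two tested identities
(against `φ` and against `x φ'`): on solutions of `φ'' = (P − λ) φ` its derivative is
`2 φ'² − x P' φ²`. This derivative is integrable and `F` vanishes at `±∞`, so its integral
over `ℝ` is zero.
-/

open MeasureTheory Filter Topology

noncomputable def virialFlux (P : ℝ → ℝ) (lam : ℝ) (φ : ℝ → ℝ) (x : ℝ) : ℝ :=
  x * deriv φ x ^ 2 - x * (P x - lam) * φ x ^ 2 + φ x * deriv φ x

theorem hasDerivAt_virialFlux {P φ : ℝ → ℝ} {lam x : ℝ} (hP : DifferentiableAt ℝ P x)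
    (hφ : DifferentiableAt ℝ φ x) (hφ' : DifferentiableAt ℝ (deriv φ) x)
    (heq : deriv (deriv φ) x = (P x - lam) * φ x) :
    HasDerivAt (virialFlux P lam φ) (2 * deriv φ x ^ 2 - x * deriv P x * φ x ^ 2) x := by
  have hkinetic := (hasDerivAt_id x).mul (hφ'.hasDerivAt.pow 2)
  have hpotential := ((hasDerivAt_id x).mul (hP.hasDerivAt.sub_const lam)).mul (hφ.hasDerivAt.pow 2)
  have hcross := hφ.hasDerivAt.mul hφ'.hasDerivAt
  refine ((hkinetic.sub hpotential).add hcross).congr_deriv ?_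
  simp only [id_eq, Pi.mul_apply, Pi.pow_apply, heq]
  ring

theorem tendsto_virialFlux {P φ : ℝ → ℝ} {lam : ℝ} {l : Filter ℝ}
    (hcross : Tendsto (fun x => φ x * deriv φ x) l (𝓝 0))
    (hkinetic : Tendsto (fun x => x * deriv φ x ^ 2) l (𝓝 0))
    (hpotential : Tendsto (fun x => x * (P x - lam) * φ x ^ 2) l (𝓝 0)) :
    Tendsto (virialFlux P lam φ) l (𝓝 0) := by
  have hsum := (hkinetic.sub hpotential).add hcross
  rwa [sub_zero, add_zero] at hsum

theorem virial_identity_general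
    (P : ℝ → ℝ) (hP : ContDiff ℝ 1 P) (lam : ℝ)
    (φ : ℝ → ℝ) (hφ : ContDiff ℝ 2 φ)
    (heq : ∀ x : ℝ, deriv (deriv φ) x = (P x - lam) * φ x)
    (hφ'L2 : MemLp (deriv φ) 2)
    (hint2 : Integrable (fun x : ℝ => x * deriv P x * φ x ^ 2))
    (hb1t : Tendsto (fun x : ℝ => φ x * deriv φ x) atTop (nhds 0))
    (hb1b : Tendsto (fun x : ℝ => φ x * deriv φ x) atBot (nhds 0))
    (hb2t : Tendsto (fun x : ℝ => x * (deriv φ x) ^ 2) atTop (nhds 0))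
    (hb2b : Tendsto (fun x : ℝ => x * (deriv φ x) ^ 2) atBot (nhds 0))
    (hb3t : Tendsto (fun x : ℝ => x * (P x - lam) * φ x ^ 2) atTop (nhds 0))
    (hb3b : Tendsto (fun x : ℝ => x * (P x - lam) * φ x ^ 2) atBot (nhds 0)) :
    2 * ∫ x : ℝ, (deriv φ x) ^ 2 = ∫ x : ℝ, x * deriv P x * φ x ^ 2 := by
  have hφ' : Differentiable ℝ (deriv φ) :=
    (hφ.iterate_deriv' 1 1).differentiable one_ne_zero
  have hflux (x : ℝ) := hasDerivAt_virialFlux (hP.differentiable one_ne_zero x)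
    (hφ.differentiable two_ne_zero x) (hφ' x) (heq x)
  have hsq : Integrable (fun x => deriv φ x ^ 2) := hφ'L2.integrable_sq
  have hzero := integral_of_hasDerivAt_of_tendsto hflux ((hsq.const_mul 2).sub hint2)
    (tendsto_virialFlux hb1b hb2b hb3b) (tendsto_virialFlux hb1t hb2t hb3t)
  rw [sub_zero, integral_sub (hsq.const_mul 2) hint2, integral_const_mul] at hzero
  linarith

/-- The virial (Pohozaev-type) identity for the eigenvalue equation
`φ'' = (P − λ)φ`: testing against `φ` and `xφ'` and integrating by parts gives
`2∫(φ')² = ∫ x P' φ²`. -/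
theorem virial_identity
    (P : ℝ → ℝ) (hP : ContDiff ℝ 1 P) (lam : ℝ)
    (φ : ℝ → ℝ) (hφ : ContDiff ℝ 2 φ)
    (heq : ∀ x : ℝ, deriv (deriv φ) x = (P x - lam) * φ x)
    (hφL2 : MemLp φ 2) (hφ'L2 : MemLp (deriv φ) 2)
    (hint1 : Integrable (fun x : ℝ => (P x - lam) * φ x ^ 2))
    (hint2 : Integrable (fun x : ℝ => x * deriv P x * φ x ^ 2))
    (hb1t : Tendsto (fun x : ℝ => φ x * deriv φ x) atTop (nhds 0))
    (hb1b : Tendsto (fun x : ℝ => φ x * deriv φ x) atBot (nhds 0))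
    (hb2t : Tendsto (fun x : ℝ => x * (deriv φ x) ^ 2) atTop (nhds 0))
    (hb2b : Tendsto (fun x : ℝ => x * (deriv φ x) ^ 2) atBot (nhds 0))
    (hb3t : Tendsto (fun x : ℝ => x * (P x - lam) * φ x ^ 2) atTop (nhds 0))
    (hb3b : Tendsto (fun x : ℝ => x * (P x - lam) * φ x ^ 2) atBot (nhds 0)) :
    2 * ∫ x : ℝ, (deriv φ x) ^ 2 = ∫ x : ℝ, x * deriv P x * φ x ^ 2 :=
  virial_identity_general P hP lam φ hφ heq hφ'L2 hint2 hb1t hb1b hb2t hb2b hb3t hb3b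
end

section
/- Let P : ℝ → ℝ be continuously differentiable with x·P'(x) ≤ 0 for all x ∈ ℝ. Let λ ∈ ℝ and let φ : ℝ → ℝ be twice continuously differentiable with φ''(x) = (P(x) − λ)·φ(x) for all x ∈ ℝ. Assume φ ∈ L²(ℝ), φ' ∈ L²(ℝ); the functions x ↦ (P(x)−λ)·φ(x)² and x ↦ x·P'(x)·φ(x)² are integrable on ℝ; and φ(x)·φ'(x) → 0, x·(φ'(x))² → 0, x·(P(x)−λ)·φ(x)² → 0 as x → ±∞. Then φ is identically zero. In other words, under the sign condition x·P'(x) ≤ 0 the Schrödinger operator −∂_x² + P has no nonzero eigenfunction (with the stated decay) for any real eigenvalue λ. -/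
/-!
Along a solution of `φ'' = (P - λ) φ` the virial function
`F = x φ'² - x (P - λ) φ² + φ φ'` has derivative `2 φ'² - x P' φ²`, which is nonnegative under
`x P' ≤ 0`. The decay hypotheses say `F → 0` at both ends, so the monotone `F` vanishes
identically, hence so does its derivative, forcing `φ' ≡ 0`. A constant in `L²(ℝ)` is zero.
-/

open MeasureTheory Filter

theorem Monotone.eq_of_tendsto_atTop_atBot {α β : Type*} [TopologicalSpace α] [PartialOrder α]
    [OrderClosedTopology α] [Preorder β] [IsDirectedOrder β] [IsCodirectedOrder β]
    {f : β → α} {a : α} (hf : Monotone f) (htop : Tendsto f atTop (nhds a))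
    (hbot : Tendsto f atBot (nhds a)) (b : β) : f b = a :=
  le_antisymm (hf.ge_of_tendsto htop b) (hf.le_of_tendsto hbot b)

theorem eq_zero_of_memLp_const {α E : Type*} [MeasurableSpace α] [NormedAddCommGroup E]
    {μ : Measure α} {p : ENNReal} {c : E} (hp_ne_zero : p ≠ 0) (hp_ne_top : p ≠ ⊤)
    (hμ : μ Set.univ = ⊤) (hc : MemLp (fun _ : α => c) p μ) : c = 0 := by
  simpa [hμ] using (memLp_const_iff hp_ne_zero hp_ne_top).mp hc

noncomputable def virial (P : ℝ → ℝ) (lam : ℝ) (φ : ℝ → ℝ) (x : ℝ) : ℝ :=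
  x * deriv φ x ^ 2 - x * (P x - lam) * φ x ^ 2 + φ x * deriv φ x

section Virial

variable {P φ : ℝ → ℝ} {lam : ℝ}

theorem hasDerivAt_virial {x : ℝ} (hP : DifferentiableAt ℝ P x) (hφ : DifferentiableAt ℝ φ x)
    (hφ' : HasDerivAt (deriv φ) ((P x - lam) * φ x) x) :
    HasDerivAt (virial P lam φ) (2 * deriv φ x ^ 2 - x * deriv P x * φ x ^ 2) x := by
  have hx := hasDerivAt_id' (x := x)
  refine (((hx.fun_mul (hφ'.fun_pow 2)).fun_sub
    ((hx.fun_mul (hP.hasDerivAt.sub_const lam)).fun_mul (hφ.hasDerivAt.fun_pow 2))).fun_add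
    (hφ.hasDerivAt.fun_mul hφ')).congr_deriv ?_
  push_cast
  ring

theorem tendsto_virial {l : Filter ℝ}
    (h₁ : Tendsto (fun x => φ x * deriv φ x) l (nhds 0))
    (h₂ : Tendsto (fun x => x * deriv φ x ^ 2) l (nhds 0))
    (h₃ : Tendsto (fun x => x * (P x - lam) * φ x ^ 2) l (nhds 0)) :
    Tendsto (virial P lam φ) l (nhds 0) := by
  have h := (h₂.sub h₃).add h₁
  rw [sub_zero, add_zero] at h
  exact h

end Virial

theorem no_internal_modes_general
    (P : ℝ → ℝ) (hP : ContDiff ℝ 1 P) (hsign : ∀ x : ℝ, x * deriv P x ≤ 0)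
    (lam : ℝ)
    (φ : ℝ → ℝ) (hφ : ContDiff ℝ 2 φ)
    (heq : ∀ x : ℝ, deriv (deriv φ) x = (P x - lam) * φ x)
    (hφL2 : MemLp φ 2)
    (hb1t : Tendsto (fun x : ℝ => φ x * deriv φ x) atTop (nhds 0))
    (hb1b : Tendsto (fun x : ℝ => φ x * deriv φ x) atBot (nhds 0))
    (hb2t : Tendsto (fun x : ℝ => x * (deriv φ x) ^ 2) atTop (nhds 0))
    (hb2b : Tendsto (fun x : ℝ => x * (deriv φ x) ^ 2) atBot (nhds 0))
    (hb3t : Tendsto (fun x : ℝ => x * (P x - lam) * φ x ^ 2) atTop (nhds 0))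
    (hb3b : Tendsto (fun x : ℝ => x * (P x - lam) * φ x ^ 2) atBot (nhds 0)) :
    ∀ x : ℝ, φ x = 0 := by
  have hφd : Differentiable ℝ φ := hφ.differentiable two_ne_zero
  have hF x : HasDerivAt (virial P lam φ) (2 * deriv φ x ^ 2 - x * deriv P x * φ x ^ 2) x :=
    hasDerivAt_virial (hP.differentiable one_ne_zero x) (hφd x)
      (heq x ▸ (hφ.differentiable_deriv_two x).hasDerivAt)
  have hF'_nonneg x : 0 ≤ 2 * deriv φ x ^ 2 - x * deriv P x * φ x ^ 2 := by
    nlinarith [hsign x, sq_nonneg (deriv φ x), sq_nonneg (φ x)]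
  have hmono : Monotone (virial P lam φ) :=
    monotone_of_deriv_nonneg (fun x => (hF x).differentiableAt) fun x => (hF x).deriv ▸ hF'_nonneg x
  have hF_zero : virial P lam φ = fun _ => 0 := funext <|
    hmono.eq_of_tendsto_atTop_atBot (tendsto_virial hb1t hb2t hb3t) (tendsto_virial hb1b hb2b hb3b)
  have hφ'_zero x : deriv φ x = 0 := by
    have h0 := (hF x).unique (hF_zero ▸ hasDerivAt_const x 0)
    nlinarith [hsign x, sq_nonneg (deriv φ x), sq_nonneg (φ x)]
  have hφ_const x : φ x = φ 0 := is_const_of_deriv_eq_zero hφd hφ'_zero x 0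
  have hφ0 : φ 0 = 0 := eq_zero_of_memLp_const two_ne_zero ENNReal.ofNat_ne_top Real.volume_univ
    (funext hφ_const ▸ hφL2)
  exact fun x => (hφ_const x).trans hφ0

/-- Under the repulsivity (sign) condition `x·P'(x) ≤ 0`, the Schrödinger operator
`−∂_x² + P` has no nonzero eigenfunction (with the stated decay) for any real
eigenvalue `λ`: the virial identity `2∫(φ')² = ∫ x P' φ²` forces `φ ≡ 0`. -/
theorem no_internal_modes
    (P : ℝ → ℝ) (hP : ContDiff ℝ 1 P) (hsign : ∀ x : ℝ, x * deriv P x ≤ 0)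
    (lam : ℝ)
    (φ : ℝ → ℝ) (hφ : ContDiff ℝ 2 φ)
    (heq : ∀ x : ℝ, deriv (deriv φ) x = (P x - lam) * φ x)
    (hφL2 : MemLp φ 2) (hφ'L2 : MemLp (deriv φ) 2)
    (hint1 : Integrable (fun x : ℝ => (P x - lam) * φ x ^ 2))
    (hint2 : Integrable (fun x : ℝ => x * deriv P x * φ x ^ 2))
    (hb1t : Tendsto (fun x : ℝ => φ x * deriv φ x) atTop (nhds 0))
    (hb1b : Tendsto (fun x : ℝ => φ x * deriv φ x) atBot (nhds 0))
    (hb2t : Tendsto (fun x : ℝ => x * (deriv φ x) ^ 2) atTop (nhds 0))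
    (hb2b : Tendsto (fun x : ℝ => x * (deriv φ x) ^ 2) atBot (nhds 0))
    (hb3t : Tendsto (fun x : ℝ => x * (P x - lam) * φ x ^ 2) atTop (nhds 0))
    (hb3b : Tendsto (fun x : ℝ => x * (P x - lam) * φ x ^ 2) atBot (nhds 0)) :
    ∀ x : ℝ, φ x = 0 :=
  no_internal_modes_general P hP hsign lam φ hφ heq hφL2 hb1t hb1b hb2t hb2b hb3t hb3b
end
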